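/- Let ⋆ and ⊗ be two right-monoidal structures on the same category with the same unit object R (with structure maps γ, η, ε for ⋆ and α, ℓ⁻¹, r for ⊗), let t be a tetrahedral isomorphism from the ⋆-structure to the ⊗-structure, let T = R⋆− and w_{M,N} := (r_M⋆N)∘t_{M,R,N}. Then: (1) w_{R,N}∘ℓ⁻¹_{TN} = id_{TN}; (2) t_{L,M,N} = w_{L⊗M,N}∘α_{L,M,TN}∘(L⊗w⁻¹_{M,N}); (3) the heptagon (w_{L,M}⋆N)∘w_{L⊗TM,N}∘α_{L,TM,TN}∘(L⊗w⁻¹_{TM,N})∘(L⊗γ_{R,M,N}) = γ_{L,M,N}∘w_{L,M⋆N} holds; (4) the tetragon ε_M∘w_{M,R} = r_M∘(M⊗ε_R) holds. -/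

import Mathlib

/-! Every identity is a short diagram chase in the axioms of `t`. The key one is
`(L ⊗ w_{M,N}) ≫ t_{L,M,N} = α_{L,M,TN} ≫ w_{L⊗M,N}`, obtained from naturality of `t`, the
counit triangle of `⊗` and the `⊗`-pentagon of `t`; cancelling the invertible `w_{M,N}` gives (2).
The heptagon (3) is (2) substituted into the `⋆`-pentagon of `t`, followed by naturality of `γ`. -/

open CategoryTheory

universe v u

/-- A right-monoidal (skew-monoidal) category structure on a category `C`
with unit object `R`: a product `⋆`, a skew-associator `γ`, a unit `η` and
a counit `ε`, none of which is assumed invertible, subject to the pentagon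
and the four (co)unit axioms. -/
structure RightMonoidalStruct (C : Type u) [Category.{v} C] (R : C) where
  smp : C → C → C
  smpHom : ∀ {X X' Y Y' : C}, (X ⟶ X') → (Y ⟶ Y') → (smp X Y ⟶ smp X' Y')
  smpHom_id : ∀ (X Y : C), smpHom (𝟙 X) (𝟙 Y) = 𝟙 (smp X Y)
  smpHom_comp : ∀ {X X' X'' Y Y' Y'' : C} (f : X ⟶ X') (f' : X' ⟶ X'')
      (g : Y ⟶ Y') (g' : Y' ⟶ Y''),
      smpHom (f ≫ f') (g ≫ g') = smpHom f g ≫ smpHom f' g'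
  γ : ∀ (L M N : C), smp L (smp M N) ⟶ smp (smp L M) N
  η : ∀ (M : C), M ⟶ smp R M
  ε : ∀ (M : C), smp M R ⟶ M
  γ_natural : ∀ {L L' M M' N N' : C} (f : L ⟶ L') (g : M ⟶ M') (h : N ⟶ N'),
      smpHom f (smpHom g h) ≫ γ L' M' N' = γ L M N ≫ smpHom (smpHom f g) h
  η_natural : ∀ {M M' : C} (f : M ⟶ M'), f ≫ η M' = η M ≫ smpHom (𝟙 R) f
  ε_natural : ∀ {M M' : C} (f : M ⟶ M'), smpHom f (𝟙 R) ≫ ε M' = ε M ≫ f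
  pentagon : ∀ (K L M N : C),
      smpHom (𝟙 K) (γ L M N) ≫ γ K (smp L M) N ≫ smpHom (γ K L M) (𝟙 N)
        = γ K L (smp M N) ≫ γ (smp K L) M N
  unit_triangle : ∀ (M N : C), η (smp M N) ≫ γ R M N = smpHom (η M) (𝟙 N)
  counit_triangle : ∀ (M N : C), γ M N R ≫ ε (smp M N) = smpHom (𝟙 M) (ε N)
  mixed_triangle : ∀ (M N : C),
      smpHom (𝟙 M) (η N) ≫ γ M R N ≫ smpHom (ε M) (𝟙 N) = 𝟙 (smp M N)
  unit_counit : η R ≫ ε R = 𝟙 R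


variable {C : Type u} [Category.{v} C] {R : C}

/-- The multiplication `μ_M := (ε_R ⋆ M) ∘ γ_{R,R,M}` of the canonical monad `T = R ⋆ -`. -/
def RightMonoidalStruct.μ (S : RightMonoidalStruct C R) (M : C) :
    S.smp R (S.smp R M) ⟶ S.smp R M :=
  S.γ R R M ≫ S.smpHom (S.ε R) (𝟙 M)

/-- The comultiplication `δ_M := γ_{M,R,R} ∘ (M ⋆ η_R)` of the canonical comonad `Q = - ⋆ R`. -/
def RightMonoidalStruct.δ (S : RightMonoidalStruct C R) (M : C) :
    S.smp M R ⟶ S.smp (S.smp M R) R :=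
  S.smpHom (𝟙 M) (S.η R) ≫ S.γ M R R


section
variable (S Sx : RightMonoidalStruct C R)

/-- A tetrahedral homomorphism from the `⋆`-structure `S` to the
`⊗`-structure `Sx` (with common unit `R`): a natural transformation
`t_{L,M,N} : L ⊗ (M ⋆ N) → (L ⊗ M) ⋆ N` satisfying the two pentagons and the
unit and counit triangles. -/
def TetraHom (t : ∀ L M N : C, Sx.smp L (S.smp M N) ⟶ S.smp (Sx.smp L M) N) :
    Prop :=
  (∀ {L L' M M' N N' : C} (f : L ⟶ L') (g : M ⟶ M') (h : N ⟶ N'),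
      Sx.smpHom f (S.smpHom g h) ≫ t L' M' N'
        = t L M N ≫ S.smpHom (Sx.smpHom f g) h) ∧
  (∀ K L M N : C,
      Sx.smpHom (𝟙 K) (t L M N) ≫ t K (Sx.smp L M) N
          ≫ S.smpHom (Sx.γ K L M) (𝟙 N)
        = Sx.γ K L (S.smp M N) ≫ t (Sx.smp K L) M N) ∧
  (∀ K L M N : C,
      Sx.smpHom (𝟙 K) (S.γ L M N) ≫ t K (S.smp L M) N
          ≫ S.smpHom (t K L M) (𝟙 N)
        = t K L (S.smp M N) ≫ S.γ (Sx.smp K L) M N) ∧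
  (∀ M N : C, Sx.η (S.smp M N) ≫ t R M N = S.smpHom (Sx.η M) (𝟙 N)) ∧
  (∀ M N : C, t M N R ≫ S.ε (Sx.smp M N) = Sx.smpHom (𝟙 M) (S.ε N))

/-- The comparison `w_{M,N} := (r_M ⋆ N) ∘ t_{M,R,N} : M ⊗ TN → M ⋆ N`
associated to a tetrahedral homomorphism, where `T = R ⋆ -`. -/
def twOf (t : ∀ L M N : C, Sx.smp L (S.smp M N) ⟶ S.smp (Sx.smp L M) N)
    (M N : C) : Sx.smp M (S.smp R N) ⟶ S.smp M N :=
  t M R N ≫ S.smpHom (Sx.ε M) (𝟙 N)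

end

namespace RightMonoidalStruct

variable (S : RightMonoidalStruct C R)

theorem smpHom_id_comp {X Y Y' Y'' : C} (g : Y ⟶ Y') (g' : Y' ⟶ Y'') :
    S.smpHom (𝟙 X) (g ≫ g') = S.smpHom (𝟙 X) g ≫ S.smpHom (𝟙 X) g' := by
  rw [← S.smpHom_comp, Category.comp_id]

theorem smpHom_comp_id {X X' X'' Y : C} (f : X ⟶ X') (f' : X' ⟶ X'') :
    S.smpHom (f ≫ f') (𝟙 Y) = S.smpHom f (𝟙 Y) ≫ S.smpHom f' (𝟙 Y) := by
  rw [← S.smpHom_comp, Category.comp_id]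

end RightMonoidalStruct

namespace TetraHom

variable {S Sx : RightMonoidalStruct C R}
  {t : ∀ L M N : C, Sx.smp L (S.smp M N) ⟶ S.smp (Sx.smp L M) N}

theorem unit_comp_twOf (ht : TetraHom S Sx t) (N : C) :
    Sx.η (S.smp R N) ≫ twOf S Sx t R N = 𝟙 (S.smp R N) := by
  obtain ⟨-, -, -, t_unit, -⟩ := ht
  rw [twOf, ← Category.assoc, t_unit, ← S.smpHom_comp, Sx.unit_counit,
    Category.comp_id, S.smpHom_id]

theorem twOf_comp_ε (ht : TetraHom S Sx t) (M : C) :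
    twOf S Sx t M R ≫ S.ε M = Sx.smpHom (𝟙 M) (S.ε R) ≫ Sx.ε M := by
  obtain ⟨-, -, -, -, t_counit⟩ := ht
  rw [twOf, Category.assoc, S.ε_natural, ← Category.assoc, t_counit]

theorem smpHom_twOf_comp (ht : TetraHom S Sx t) (L M N : C) :
    Sx.smpHom (𝟙 L) (twOf S Sx t M N) ≫ t L M N
      = Sx.γ L M (S.smp R N) ≫ twOf S Sx t (Sx.smp L M) N := by
  obtain ⟨t_natural, t_pentagon_α, -, -, -⟩ := ht
  calc Sx.smpHom (𝟙 L) (twOf S Sx t M N) ≫ t L M N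
      = Sx.smpHom (𝟙 L) (t M R N) ≫ t L (Sx.smp M R) N
          ≫ S.smpHom (Sx.smpHom (𝟙 L) (Sx.ε M)) (𝟙 N) := by
        rw [twOf, Sx.smpHom_id_comp, Category.assoc, t_natural]
    _ = (Sx.smpHom (𝟙 L) (t M R N) ≫ t L (Sx.smp M R) N ≫ S.smpHom (Sx.γ L M R) (𝟙 N))
          ≫ S.smpHom (Sx.ε (Sx.smp L M)) (𝟙 N) := by
        simp only [← Sx.counit_triangle, S.smpHom_comp_id, Category.assoc]
    _ = Sx.γ L M (S.smp R N) ≫ twOf S Sx t (Sx.smp L M) N := by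
        rw [t_pentagon_α, Category.assoc, twOf]

theorem eq_smpHom_inv_twOf_comp (ht : TetraHom S Sx t) (L M N : C)
    [IsIso (twOf S Sx t M N)] :
    t L M N
      = Sx.smpHom (𝟙 L) (inv (twOf S Sx t M N))
          ≫ Sx.γ L M (S.smp R N) ≫ twOf S Sx t (Sx.smp L M) N := by
  rw [← ht.smpHom_twOf_comp, ← Category.assoc, ← Sx.smpHom_id_comp, IsIso.inv_hom_id,
    Sx.smpHom_id, Category.id_comp]

theorem smpHom_γ_comp_t_comp_twOf (ht : TetraHom S Sx t) (L M N : C) :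
    Sx.smpHom (𝟙 L) (S.γ R M N) ≫ t L (S.smp R M) N ≫ S.smpHom (twOf S Sx t L M) (𝟙 N)
      = twOf S Sx t L (S.smp M N) ≫ S.γ L M N := by
  obtain ⟨-, -, t_pentagon_γ, -, -⟩ := ht
  calc Sx.smpHom (𝟙 L) (S.γ R M N) ≫ t L (S.smp R M) N ≫ S.smpHom (twOf S Sx t L M) (𝟙 N)
      = (Sx.smpHom (𝟙 L) (S.γ R M N) ≫ t L (S.smp R M) N ≫ S.smpHom (t L R M) (𝟙 N))
          ≫ S.smpHom (S.smpHom (Sx.ε L) (𝟙 M)) (𝟙 N) := by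
        simp only [twOf, S.smpHom_comp_id, Category.assoc]
    _ = t L R (S.smp M N) ≫ S.smpHom (Sx.ε L) (S.smpHom (𝟙 M) (𝟙 N)) ≫ S.γ L M N := by
        rw [t_pentagon_γ, Category.assoc, S.γ_natural]
    _ = twOf S Sx t L (S.smp M N) ≫ S.γ L M N := by
        rw [S.smpHom_id, twOf, Category.assoc]

end TetraHom

/-- Lemma 8.3 of Szlachányi.  Let `⋆` and `⊗` be two
right-monoidal structures on the same category with the same unit `R`, let `t`
be a tetrahedral isomorphism from the `⋆`- to the `⊗`-structure, `T = R ⋆ -`,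
and `w_{M,N} := (r_M ⋆ N) ∘ t_{M,R,N}`.  Then:
(1) `w_{R,N} ∘ ℓ⁻¹_{TN} = id`;
(2) `t_{L,M,N} = w_{L⊗M,N} ∘ α_{L,M,TN} ∘ (L ⊗ w⁻¹_{M,N})`;
(3) the heptagon
`(w_{L,M}⋆N) ∘ w_{L⊗TM,N} ∘ α_{L,TM,TN} ∘ (L⊗w⁻¹_{TM,N}) ∘ (L⊗γ_{R,M,N})
  = γ_{L,M,N} ∘ w_{L,M⋆N}`; and
(4) the tetragon `ε_M ∘ w_{M,R} = r_M ∘ (M ⊗ ε_R)` hold. -/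
theorem tetrahedral_iso_yields_w (S Sx : RightMonoidalStruct C R)
    (t : ∀ L M N : C, Sx.smp L (S.smp M N) ⟶ S.smp (Sx.smp L M) N)
    (ht : TetraHom S Sx t)
    [∀ M N : C, IsIso (twOf S Sx t M N)] :
    (∀ N : C, Sx.η (S.smp R N) ≫ twOf S Sx t R N = 𝟙 (S.smp R N)) ∧
    (∀ L M N : C,
        t L M N
          = Sx.smpHom (𝟙 L) (inv (twOf S Sx t M N))
              ≫ Sx.γ L M (S.smp R N) ≫ twOf S Sx t (Sx.smp L M) N) ∧
    (∀ L M N : C,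
        Sx.smpHom (𝟙 L) (S.γ R M N)
            ≫ Sx.smpHom (𝟙 L) (inv (twOf S Sx t (S.smp R M) N))
            ≫ Sx.γ L (S.smp R M) (S.smp R N)
            ≫ twOf S Sx t (Sx.smp L (S.smp R M)) N
            ≫ S.smpHom (twOf S Sx t L M) (𝟙 N)
          = twOf S Sx t L (S.smp M N) ≫ S.γ L M N) ∧
    (∀ M : C,
        twOf S Sx t M R ≫ S.ε M
          = Sx.smpHom (𝟙 M) (S.ε R) ≫ Sx.ε M) := by
  refine ⟨ht.unit_comp_twOf, fun L M N => ht.eq_smpHom_inv_twOf_comp L M N, fun L M N => ?_,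
    ht.twOf_comp_ε⟩
  rw [← ht.smpHom_γ_comp_t_comp_twOf, ht.eq_smpHom_inv_twOf_comp L (S.smp R M) N]
  simp only [Category.assoc]
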